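/- Consider the 4-state MDP of Figure 2 with parameters T ≥ 1 and ε > 0: states 1,2 form a deterministic 2-cycle with rewards 1/2 on each transition (actions 'down' at 1, left-to-1 at 2); action 'right' at state 1 moves to state 3 with reward 0; action 'left' at state 4 moves to state 2 with reward 0; the unique action at state 3 gives reward 1/2, staying at 3 with probability 1−1/T and moving to 4 with probability 1/T; action 'up' at state 4 gives reward 1/2+ε, staying at 4 with probability 1−1/T and moving to 3 with probability 1/T. Then the unique gain-optimal policy π_RU has constant gain (1+ε)/2 and its bias satisfies span(h^⋆) = εT/2 + ε + 1/2, while the policy π_DL has constant gain 1/2 = ρ^⋆ − ε/2 and bias span span(h^{π_DL}) = 1/2. -/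

import Mathlib

/-! The gain and bias of a policy are read off its stationarity and Poisson equations
state by state. The loop `3 ⇄ 4` under `π_RU` earns `1/2` at state 3 and `1/2 + ε` at
state 4 and stays at each for about `T` steps, so the Poisson equation at state 3 forces
`h(4) - h(3) = ε T / 2`; under `π_DL` the bias is `0` on the cycle `1 ⇄ 2` and `-1/2` at the
two transient states. No other deterministic policy has constant gain `(1 + ε) / 2`: under
'down' the cycle `1 ⇄ 2` earns `1/2` per step, and `π_RL` has gain `(T + 1) / (2 (T + 3))`. -/

open Matrix

/-- The span seminorm on ℝ^{Fin 4}. -/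
noncomputable def spanSem (x : Fin 4 → ℝ) : ℝ := (⨆ s, x s) - ⨅ s, x s

/-- Transition matrix of the stationary policy taking action 'right' at state 1
with probability p and action 'up' at state 4 with probability q, in the 4-state
MDP of Figure 2 (states 1,2,3,4 are indices 0,1,2,3). -/
noncomputable def Pmat (T p q : ℝ) : Matrix (Fin 4) (Fin 4) ℝ :=
  !![0, 1 - p, p, 0;
     1, 0, 0, 0;
     0, 0, 1 - 1 / T, 1 / T;
     0, 1 - q, q * (1 / T), q * (1 - 1 / T)]

/-- Reward vector: 'down' at state 1 gives 1/2, 'right' gives 0; state 2 gives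
1/2; state 3 gives 1/2; 'up' at state 4 gives 1/2+ε, 'left' gives 0. -/
noncomputable def rvec (ε p q : ℝ) : Fin 4 → ℝ :=
  ![(1 - p) * (1 / 2), 1 / 2, 1 / 2, q * (1 / 2 + ε)]

lemma spanSem_eq_sub (x : Fin 4 → ℝ) (i j : Fin 4) (hmax : ∀ s, x s ≤ x i)
    (hmin : ∀ s, x j ≤ x s) : spanSem x = x i - x j := by
  have hsup : (⨆ s, x s) = x i :=
    le_antisymm (ciSup_le hmax) (le_ciSup (Set.finite_range x).bddAbove i)
  have hinf : (⨅ s, x s) = x j :=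
    le_antisymm (ciInf_le (Set.finite_range x).bddBelow j) (le_ciInf hmin)
  rw [spanSem, hsup, hinf]

lemma Pmat_mulVec (T p q : ℝ) (v : Fin 4 → ℝ) :
    Pmat T p q *ᵥ v = ![(1 - p) * v 1 + p * v 2, v 0, v 2 + (v 3 - v 2) / T,
      (1 - q) * v 1 + q * (v 3 + (v 2 - v 3) / T)] := by
  ext i
  fin_cases i <;> simp [Pmat, mulVec, dotProduct, Fin.sum_univ_four] <;> ring

section Equations

variable {T ε p q : ℝ} {ρ h : Fin 4 → ℝ}

lemma eqns_of_Pmat_mulVec_eq_self (hT : T ≠ 0) (hP : Pmat T p q *ᵥ ρ = ρ) :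
    ρ 0 = (1 - p) * ρ 1 + p * ρ 2 ∧ ρ 1 = ρ 0 ∧ ρ 3 = ρ 2 ∧
      ρ 3 = (1 - q) * ρ 1 + q * ρ 3 := by
  simp only [Pmat_mulVec, funext_iff, Fin.forall_fin_succ] at hP
  obtain ⟨h0, h1, h2, h3, -⟩ := hP
  have h32 : ρ 3 = ρ 2 := by
    have : (ρ 3 - ρ 2) / T = 0 := by simpa using h2
    rw [div_eq_zero_iff, sub_eq_zero] at this
    exact this.resolve_right hT
  refine ⟨h0.symm, h1.symm, h32, ?_⟩
  simpa [h32] using h3.symm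

lemma eqns_of_poisson (hB : ρ + h = rvec ε p q + Pmat T p q *ᵥ h) :
    ρ 0 + h 0 = (1 - p) * (1 / 2) + ((1 - p) * h 1 + p * h 2) ∧
    ρ 1 + h 1 = 1 / 2 + h 0 ∧
    ρ 2 + h 2 = 1 / 2 + (h 2 + (h 3 - h 2) / T) ∧
    ρ 3 + h 3 = q * (1 / 2 + ε) + ((1 - q) * h 1 + q * (h 3 + (h 2 - h 3) / T)) := by
  simpa [Pmat_mulVec, rvec, funext_iff, Fin.forall_fin_succ] using hB

lemma const_gain_of_down {c : ℝ} (hB : (fun _ => c) + h = rvec ε 0 q + Pmat T 0 q *ᵥ h) :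
    c = 1 / 2 := by
  obtain ⟨b0, b1, -, -⟩ := eqns_of_poisson hB
  linarith

lemma const_gain_of_right_left {c : ℝ} (hT : 0 < T)
    (hB : (fun _ => c) + h = rvec ε 1 0 + Pmat T 1 0 *ᵥ h) :
    c = (T + 1) / (2 * (T + 3)) := by
  obtain ⟨b0, b1, b2, b3⟩ := eqns_of_poisson hB
  have hdrift : h 3 - h 2 = (c - 1 / 2) * T := by
    field_simp at b2 ⊢
    linarith
  rw [eq_div_iff (by positivity)]
  linarith

lemma gain_bias_RU (hT : T ≠ 0) (hP : Pmat T 1 1 *ᵥ ρ = ρ)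
    (hB : ρ + h = rvec ε 1 1 + Pmat T 1 1 *ᵥ h) (hnorm : h 2 + h 3 = 0) :
    ρ = (fun _ => (1 + ε) / 2) ∧
      h = ![-(ε * T) / 4 - (1 + ε) / 2, -(ε * T) / 4 - 1 / 2 - ε, -(ε * T) / 4,
        ε * T / 4] := by
  obtain ⟨s0, s1, s32, -⟩ := eqns_of_Pmat_mulVec_eq_self hT hP
  obtain ⟨b0, b1, b2, b3⟩ := eqns_of_poisson hB
  have hdrift3 : h 3 - h 2 = (ρ 2 - 1 / 2) * T := by
    field_simp at b2 ⊢
    linarith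
  have hdrift4 : h 2 - h 3 = (ρ 2 - 1 / 2 - ε) * T := by
    rw [s32] at b3
    field_simp at b3 ⊢
    linarith
  have hgain : ρ 2 = (1 + ε) / 2 := by
    have : (2 * ρ 2 - (1 + ε)) * T = 0 := by linarith
    linarith [(mul_eq_zero.mp this).resolve_right hT]
  rw [hgain] at hdrift3
  refine ⟨funext fun s => ?_, funext fun s => ?_⟩ <;> fin_cases s
  all_goals simp only [Fin.zero_eta, Fin.mk_one, Fin.reduceFinMk, Matrix.cons_val]
  all_goals linarith

lemma gain_bias_DL (hT : T ≠ 0) (hP : Pmat T 0 0 *ᵥ ρ = ρ)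
    (hB : ρ + h = rvec ε 0 0 + Pmat T 0 0 *ᵥ h) (hnorm : h 0 + h 1 = 0) :
    ρ = (fun _ => 1 / 2) ∧ h = ![0, 0, -1 / 2, -1 / 2] := by
  obtain ⟨s0, s1, s32, s3⟩ := eqns_of_Pmat_mulVec_eq_self hT hP
  obtain ⟨b0, b1, b2, b3⟩ := eqns_of_poisson hB
  have hdrift3 : h 3 - h 2 = (ρ 2 - 1 / 2) * T := by
    field_simp at b2 ⊢
    linarith
  have hgain3 : ρ 3 = 1 / 2 := by linarith
  rw [← s32, hgain3, sub_self, zero_mul] at hdrift3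
  refine ⟨funext fun s => ?_, funext fun s => ?_⟩ <;> fin_cases s
  all_goals simp only [Fin.zero_eta, Fin.mk_one, Fin.reduceFinMk, Matrix.cons_val]
  all_goals linarith

end Equations

lemma spanSem_bias_RU {T ε : ℝ} (hT : 0 ≤ T) (hε : 0 ≤ ε) :
    spanSem ![-(ε * T) / 4 - (1 + ε) / 2, -(ε * T) / 4 - 1 / 2 - ε, -(ε * T) / 4, ε * T / 4] =
      ε * T / 2 + ε + 1 / 2 := by
  have hεT : 0 ≤ ε * T := mul_nonneg hε hT
  rw [spanSem_eq_sub _ 3 1 ?_ ?_]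
  · simp only [Matrix.cons_val]
    ring
  all_goals
    intro s
    fin_cases s <;> simp only [Fin.zero_eta, Fin.mk_one, Fin.reduceFinMk, Matrix.cons_val] <;>
      linarith

lemma spanSem_bias_DL : spanSem ![0, 0, -1 / 2, -1 / 2] = 1 / 2 := by
  rw [spanSem_eq_sub _ 0 2 ?_ ?_]
  · simp only [Matrix.cons_val]
    norm_num
  all_goals
    intro s
    fin_cases s <;> simp only [Fin.zero_eta, Fin.mk_one, Fin.reduceFinMk, Matrix.cons_val] <;>
      norm_num

/-- In the 4-state MDP of Figure 2: the unique gain-optimal deterministic policy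
is π_RU (p = q = 1), with constant gain (1+ε)/2 and bias span εT/2 + ε + 1/2,
while π_DL (p = q = 0) has constant gain (1+ε)/2 − ε/2 = 1/2 and bias span 1/2.
Gain and bias are characterized by P_π ρ = ρ, ρ + h = r_π + P_π h, together with
the normalization P_π^∞ h = 0 (which amounts to h(3)+h(4) = 0 for π_RU and
h(1)+h(2) = 0 for π_DL, where the recurrent classes carry uniform stationary
distributions). -/
theorem stmt19 (T ε : ℝ) (hT : 1 ≤ T) (hε : 0 < ε) :
    -- π_RU is the unique gain-optimal deterministic policy
    (∀ p q : ℝ, (p = 0 ∨ p = 1) → (q = 0 ∨ q = 1) → ∀ ρ h : Fin 4 → ℝ,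
      Pmat T p q *ᵥ ρ = ρ → ρ + h = rvec ε p q + Pmat T p q *ᵥ h →
      ρ = (fun _ => (1 + ε) / 2) → p = 1 ∧ q = 1) ∧
    -- gain and bias span of π_RU
    (∀ ρ h : Fin 4 → ℝ,
      Pmat T 1 1 *ᵥ ρ = ρ → ρ + h = rvec ε 1 1 + Pmat T 1 1 *ᵥ h →
      h 2 + h 3 = 0 →
      ρ = (fun _ => (1 + ε) / 2) ∧ spanSem h = ε * T / 2 + ε + 1 / 2) ∧
    -- gain and bias span of π_DL: its gain is ρ⋆ − ε/2 and its bias span is 1/2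
    (∀ ρ h : Fin 4 → ℝ,
      Pmat T 0 0 *ᵥ ρ = ρ → ρ + h = rvec ε 0 0 + Pmat T 0 0 *ᵥ h →
      h 0 + h 1 = 0 →
      ρ = (fun _ => (1 + ε) / 2 - ε / 2) ∧ spanSem h = 1 / 2) := by
  have hT0 : 0 < T := by linarith
  refine ⟨fun p q hp hq ρ h _ hB hρ => ?_, fun ρ h hP hB hnorm => ?_,
    fun ρ h hP hB hnorm => ?_⟩
  · subst hρ
    rcases hp with rfl | rfl
    · linarith [const_gain_of_down hB]
    rcases hq with rfl | rfl
    · have hRL := const_gain_of_right_left hT0 hB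
      have : (T + 1) / (2 * (T + 3)) < 1 / 2 := by
        rw [div_lt_iff₀ (by positivity)]
        linarith
      linarith
    · exact ⟨rfl, rfl⟩
  · obtain ⟨rfl, rfl⟩ := gain_bias_RU hT0.ne' hP hB hnorm
    exact ⟨rfl, spanSem_bias_RU hT0.le hε.le⟩
  · obtain ⟨rfl, rfl⟩ := gain_bias_DL hT0.ne' hP hB hnorm
    exact ⟨funext fun _ => by ring, spanSem_bias_DL⟩
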